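/- Let N, k be positive natural numbers, let H ∈ ℝ^{N×N}, U ∈ ℝ^{N×k}, Ĥ ∈ ℝ^{k×k}, u_{k+1} ∈ ℝ^N, and ĥ ∈ ℝ, and suppose the Arnoldi relation H U = U Ĥ + ĥ u_{k+1} e_kᵀ holds, where e_k ∈ ℝ^k is the k-th standard basis vector. For each integer i ≥ 1 define φ_i(Ĥ) = Σ_{m≥0} Ĥ^m / (m+i)! ∈ ℝ^{k×k}. Let u₁ = U e₁, where e₁ ∈ ℝ^k is the first standard basis vector. Then the error of the Krylov approximation of the matrix exponential satisfies the expansion exp(H) u₁ - U exp(Ĥ) e₁ = ĥ · Σ_{i=1}^{∞} (e_kᵀ φ_i(Ĥ) e₁) H^{i-1} u_{k+1}, where the series on the right converges in ℝ^N. -/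

import Mathlib

open Matrix

/-- `φᵢ(M) = Σ_{m≥0} Mᵐ/(m+i)!`, the matrix version of the entire functions
`φ₀(z) = eᶻ`, `φ_{i+1}(z) = (φᵢ(z) - φᵢ(0))/z`. -/
noncomputable def phiMat (k : ℕ) (i : ℕ) (M : Matrix (Fin k) (Fin k) ℝ) :
    Matrix (Fin k) (Fin k) ℝ :=
  ∑' m : ℕ, ((m + i).factorial : ℝ)⁻¹ • M ^ m

/-!
Write `E = ĥ u_{k+1} e_kᵀ`. Iterating `H U = U Ĥ + E` gives
`H^{d+1} U - U Ĥ^{d+1} = Σ_{i+j=d} H^i E Ĥ^j`, so summing the exponential series,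
`exp(H) U - U exp(Ĥ) = Σ_d Σ_{i+j=d} H^i E Ĥ^j / (i+j+1)!`.
Since `i! j! ≤ (i+j+1)!`, this double series is dominated by `‖E‖ exp‖H‖ exp‖Ĥ‖` and may be
summed over `j` first, which gives `Σ_i H^i E φ_{i+1}(Ĥ)`; applying it to `e₁` gives the
expansion.
-/

open Finset
open scoped Nat

theorem HasSum.of_hasSum_sum_antidiagonal {A α : Type*} [AddMonoid A] [HasAntidiagonal A]
    [AddCommMonoid α] [TopologicalSpace α] [ContinuousAdd α] [T3Space α] {f : A × A → α} {s : α}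
    (hf : Summable f) (h : HasSum (fun n => ∑ p ∈ antidiagonal n, f p) s) : HasSum f s := by
  have hσ : HasSum (fun n => ∑ p ∈ antidiagonal n, f p) (∑' p, f p) := by
    simpa only [Finset.sum_coe_sort] using
      (HasAntidiagonal.sigmaAntidiagonalEquivProd.hasSum_iff.mpr hf.hasSum).sigma
        fun n => hasSum_fintype fun p : antidiagonal n => f p
  exact h.unique hσ ▸ hf.hasSum

theorem Nat.factorial_mul_factorial_le_factorial_add (i j : ℕ) : i ! * j ! ≤ (i + j)! :=
  Nat.le_of_dvd (Nat.factorial_pos _) (Nat.factorial_mul_factorial_dvd_factorial_add i j)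

namespace Matrix

theorem pow_succ_mul_sub_mul_pow_succ {R : Type*} [Ring R] {m n : Type*} [Fintype m]
    [DecidableEq m] [Fintype n] [DecidableEq n] {H : Matrix m m R} {U E : Matrix m n R}
    {G : Matrix n n R} (h : H * U = U * G + E) (d : ℕ) :
    H ^ (d + 1) * U - U * G ^ (d + 1) = ∑ p ∈ antidiagonal d, H ^ p.1 * E * G ^ p.2 := by
  induction d with
  | zero => simp [h]
  | succ d ih =>
    have hE : H * U - U * G = E := by rw [h, add_sub_cancel_left]
    rw [Nat.sum_antidiagonal_succ, pow_zero, Matrix.one_mul]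
    calc H ^ (d + 1 + 1) * U - U * G ^ (d + 1 + 1)
        = H * (H ^ (d + 1) * U - U * G ^ (d + 1)) + (H * U - U * G) * G ^ (d + 1) := by
          simp only [pow_succ' H (d + 1), pow_succ' G (d + 1), Matrix.mul_sub, Matrix.sub_mul,
            Matrix.mul_assoc]
          abel
      _ = _ := by
          rw [ih, hE, Matrix.mul_sum, add_comm]
          simp only [← Matrix.mul_assoc, pow_succ' H]

theorem mul_smul_vecMulVec_mul_mulVec {R : Type*} [CommRing R] {l m n o : Type*}
    [Fintype m] [Fintype n] [Fintype o] (A : Matrix l m R) (c : R) (u : m → R) (w : n → R)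
    (B : Matrix n o R) (v : o → R) :
    (A * (c • vecMulVec u w) * B) *ᵥ v = (c * (w ⬝ᵥ (B *ᵥ v))) • (A *ᵥ u) := by
  rw [← mulVec_mulVec, ← mulVec_mulVec, smul_mulVec, vecMulVec_mulVec, op_smul_eq_smul,
    mulVec_smul, mulVec_smul, smul_smul]

end Matrix

section LinftyOpNorm

-- The norms only serve to bound the series: they induce the product topology on matrices,
-- so the statements below do not depend on them.
attribute [local instance] Matrix.linftyOpNormedAddCommGroup Matrix.linftyOpNormedSpace
  Matrix.linftyOpNormedRing Matrix.linftyOpNormedAlgebra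

theorem hasSum_mul_phiMat {l : Type*} {k : ℕ} (A : Matrix l (Fin k) ℝ)
    (G : Matrix (Fin k) (Fin k) ℝ) (i : ℕ) :
    HasSum (fun j : ℕ => ((j + i)! : ℝ)⁻¹ • (A * G ^ j)) (A * phiMat k i G) := by
  have hphi : Summable fun j : ℕ => ((j + i)! : ℝ)⁻¹ • G ^ j := by
    refine .of_norm_bounded (NormedSpace.norm_expSeries_summable' (𝕂 := ℝ) G) fun j => ?_
    rw [norm_smul, norm_smul, norm_inv, norm_inv, Real.norm_natCast, Real.norm_natCast]
    gcongr
    exact Nat.le_add_right j i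
  simpa [Function.comp_def, Matrix.addMonoidHomMulLeft, Matrix.mul_smul, phiMat] using
    hphi.hasSum.map (Matrix.addMonoidHomMulLeft A) (continuous_const.matrix_mul continuous_id)

variable {m : Type*} [Fintype m] [DecidableEq m] {k : ℕ}

theorem summable_pow_mul_mul_pow (H : Matrix m m ℝ) (E : Matrix m (Fin k) ℝ)
    (G : Matrix (Fin k) (Fin k) ℝ) :
    Summable fun p : ℕ × ℕ => ((p.2 + (p.1 + 1))! : ℝ)⁻¹ • (H ^ p.1 * E * G ^ p.2) := by
  have hexp := ((NormedSpace.norm_expSeries_summable' (𝕂 := ℝ) H).mul_of_nonneg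
    (NormedSpace.norm_expSeries_summable' (𝕂 := ℝ) G) (fun _ => norm_nonneg _)
    (fun _ => norm_nonneg _)).mul_left ‖E‖
  refine .of_norm_bounded hexp fun ⟨i, j⟩ => ?_
  have hfac : (i ! : ℝ) * j ! ≤ (j + (i + 1))! := by
    exact_mod_cast (Nat.factorial_mul_factorial_le_factorial_add i j).trans
      (Nat.factorial_le (by omega))
  calc ‖((j + (i + 1))! : ℝ)⁻¹ • (H ^ i * E * G ^ j)‖
      ≤ ((i ! : ℝ) * j !)⁻¹ * (‖H ^ i‖ * ‖E‖ * ‖G ^ j‖) := by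
        rw [norm_smul, norm_inv, Real.norm_natCast]
        gcongr
        exact (Matrix.linfty_opNorm_mul _ _).trans
          (mul_le_mul_of_nonneg_right (Matrix.linfty_opNorm_mul _ _) (norm_nonneg _))
    _ = ‖E‖ * (‖(i ! : ℝ)⁻¹ • H ^ i‖ * ‖(j ! : ℝ)⁻¹ • G ^ j‖) := by
        simp only [norm_smul, norm_inv, Real.norm_natCast, mul_inv]
        ring

theorem hasSum_exp_mul_sub_mul_exp (H : Matrix m m ℝ) (U : Matrix m (Fin k) ℝ)
    (G : Matrix (Fin k) (Fin k) ℝ) :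
    HasSum (fun d : ℕ => ((d + 1)! : ℝ)⁻¹ • (H ^ (d + 1) * U - U * G ^ (d + 1)))
      (NormedSpace.exp H * U - U * NormedSpace.exp G) := by
  have hH := (NormedSpace.exp_series_hasSum_exp' (𝕂 := ℝ) H).map
    (Matrix.addMonoidHomMulRight U) (continuous_id.matrix_mul continuous_const)
  have hG := (NormedSpace.exp_series_hasSum_exp' (𝕂 := ℝ) G).map
    (Matrix.addMonoidHomMulLeft U) (continuous_const.matrix_mul continuous_id)
  have hsub := (hasSum_nat_add_iff' 1).mpr (hH.sub hG)
  simp only [Function.comp_def, Matrix.addMonoidHomMulLeft, Matrix.addMonoidHomMulRight,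
    AddMonoidHom.coe_mk, ZeroHom.coe_mk, Finset.sum_range_one, Nat.factorial_zero, pow_zero,
    Matrix.one_mul, Matrix.mul_one, Matrix.smul_mul, Matrix.mul_smul, sub_self, smul_zero,
    sub_zero, ← smul_sub] at hsub
  exact hsub

end LinftyOpNorm

theorem hasSum_pow_mul_mul_phiMat {m : Type*} [Fintype m] [DecidableEq m] {k : ℕ}
    {H : Matrix m m ℝ} {U E : Matrix m (Fin k) ℝ} {G : Matrix (Fin k) (Fin k) ℝ}
    (h : H * U = U * G + E) :
    HasSum (fun i : ℕ => H ^ i * E * phiMat k (i + 1) G)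
      (NormedSpace.exp H * U - U * NormedSpace.exp G) := by
  refine (HasSum.of_hasSum_sum_antidiagonal (summable_pow_mul_mul_pow H E G) ?_).prod_fiberwise
    fun i => hasSum_mul_phiMat (H ^ i * E) G (i + 1)
  convert hasSum_exp_mul_sub_mul_exp H U G using 2 with d
  rw [Matrix.pow_succ_mul_sub_mul_pow_succ h, Finset.smul_sum]
  refine sum_congr rfl fun p hp => ?_
  rw [← mem_antidiagonal.mp hp, add_comm p.2, Nat.add_right_comm p.1 1 p.2]

theorem krylov_exp_error_expansion_general (N k : ℕ) (hk : 0 < k)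
    (H : Matrix (Fin N) (Fin N) ℝ) (U : Matrix (Fin N) (Fin k) ℝ)
    (Hhat : Matrix (Fin k) (Fin k) ℝ) (uNext : Fin N → ℝ) (hhat : ℝ)
    (harnoldi : H * U = U * Hhat
      + hhat • Matrix.vecMulVec uNext
          (Pi.single ⟨k - 1, Nat.sub_lt hk one_pos⟩ 1 : Fin k → ℝ)) :
    HasSum
      (fun i : ℕ =>
        (hhat * ((Pi.single ⟨k - 1, Nat.sub_lt hk one_pos⟩ 1 : Fin k → ℝ) ⬝ᵥ
          (phiMat k (i + 1) Hhat *ᵥ (Pi.single ⟨0, hk⟩ 1 : Fin k → ℝ)))) •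
          (H ^ i *ᵥ uNext))
      (NormedSpace.exp H *ᵥ (U *ᵥ (Pi.single ⟨0, hk⟩ 1 : Fin k → ℝ))
        - U *ᵥ (NormedSpace.exp Hhat *ᵥ (Pi.single ⟨0, hk⟩ 1 : Fin k → ℝ))) := by
  have h := (hasSum_pow_mul_mul_phiMat harnoldi).map
    (mulVec.addMonoidHomLeft (Pi.single ⟨0, hk⟩ 1)) (continuous_id.matrix_mulVec continuous_const)
  simp only [Function.comp_def, mulVec.addMonoidHomLeft, AddMonoidHom.coe_mk, ZeroHom.coe_mk,
    mul_smul_vecMulVec_mul_mulVec, sub_mulVec] at h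
  simpa only [mulVec_mulVec] using h

/-- Saad's error expansion for the Krylov approximation of the matrix
exponential: if `H U = U Ĥ + ĥ u_{k+1} eₖᵀ`, then
`exp(H) u₁ - U exp(Ĥ) e₁ = ĥ Σ_{i≥1} (eₖᵀ φᵢ(Ĥ) e₁) H^{i-1} u_{k+1}`
(the series being indexed here by `i ≥ 0` after the shift `i ↦ i + 1`),
and the series converges in `ℝ^N`. -/
theorem krylov_exp_error_expansion (N k : ℕ) (hN : 0 < N) (hk : 0 < k)
    (H : Matrix (Fin N) (Fin N) ℝ) (U : Matrix (Fin N) (Fin k) ℝ)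
    (Hhat : Matrix (Fin k) (Fin k) ℝ) (uNext : Fin N → ℝ) (hhat : ℝ)
    (harnoldi : H * U = U * Hhat
      + hhat • Matrix.vecMulVec uNext
          (Pi.single ⟨k - 1, Nat.sub_lt hk one_pos⟩ 1 : Fin k → ℝ)) :
    HasSum
      (fun i : ℕ =>
        (hhat * ((Pi.single ⟨k - 1, Nat.sub_lt hk one_pos⟩ 1 : Fin k → ℝ) ⬝ᵥ
          (phiMat k (i + 1) Hhat *ᵥ (Pi.single ⟨0, hk⟩ 1 : Fin k → ℝ)))) •
          (H ^ i *ᵥ uNext))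
      (NormedSpace.exp H *ᵥ (U *ᵥ (Pi.single ⟨0, hk⟩ 1 : Fin k → ℝ))
        - U *ᵥ (NormedSpace.exp Hhat *ᵥ (Pi.single ⟨0, hk⟩ 1 : Fin k → ℝ))) :=
  krylov_exp_error_expansion_general N k hk H U Hhat uNext hhat harnoldi
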